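/- arXiv:1812.00421 — 7 statements merged into one kernel-verified Lean document; each statement's English description precedes it below -/
import Mathlib

section
/- Let x be a pattern of length m and y a text of length n over an alphabet Σ. For all 1 ≤ i ≤ m and i ≤ j ≤ n, the prefix x[1..i] utd-matches the substring y[j−i+1..j] if and only if one of the following holds: (a) x[i] = y[j] and (either i = 1, or i ≥ 2 and x[1..i−1] utd-matches y[j−i+1..j−1]); or (b) there exist integers h, k ≥ 1 with h + k ≤ i and h + k ≤ j such that x[i−k−h+1..i−k] = y[j−h+1..j], x[i−k+1..i] = y[j−h−k+1..j−h], and (either i = h + k, or x[1..i−h−k] utd-matches y[j−i+1..j−h−k]). -/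
/-- The utd-match relation: match up to non-overlapping unbalanced translocations
of adjacent factors. -/
inductive UTD {α : Type*} : List α → List α → Prop
  | nil : UTD [] []
  | snoc (u v : List α) (a : α) : UTD u v → UTD (u ++ [a]) (v ++ [a])
  | transloc (u v z w : List α) : UTD u v → z ≠ [] → w ≠ [] →
      UTD (u ++ z ++ w) (v ++ w ++ z)

/-- `seg x a b` is the substring `x[a..b]` (1-based, inclusive). -/
def seg {α : Type*} (x : List α) (a b : ℕ) : List α :=
  (x.take b).drop (a - 1)

lemma seg_def {α : Type*} (x : List α) (a b : ℕ) : seg x a b = (x.take b).drop (a-1) := rfl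

lemma splitG0 {α : Type*} (y : List α) {b c : ℕ} (hbc : b ≤ c) (hb : b ≤ y.length) :
    y.take c = y.take b ++ (y.take c).drop b := by
  conv_lhs => rw [← List.take_append_drop b (y.take c)]
  rw [List.take_take, min_eq_left hbc]

/-- Splitting a window `[a..c)` of `y` at position `b`. -/
lemma splitG {α : Type*} (y : List α) {a b c : ℕ} (hbc : b ≤ c) (hab : a ≤ b)
    (hb : b ≤ y.length) :
    (y.take c).drop a = (y.take b).drop a ++ (y.take c).drop b := by
  conv_lhs => rw [← List.take_append_drop b (y.take c)]
  rw [List.take_take, min_eq_left hbc, List.drop_append_of_le_length (by simp; omega)]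

/-- Lemma 1: for `1 ≤ i ≤ m` and `i ≤ j ≤ n`, the prefix `x[1..i]` utd-matches
`y[j-i+1..j]` iff condition (a) or condition (b) holds. -/
theorem prefix_utd_match_iff {α : Type*} (x y : List α) (m n : ℕ)
    (hx : x.length = m) (hy : y.length = n)
    (i j : ℕ) (hi1 : 1 ≤ i) (him : i ≤ m) (hij : i ≤ j) (hjn : j ≤ n) :
    UTD (seg x 1 i) (seg y (j - i + 1) j) ↔
      ((x[i - 1]? = y[j - 1]? ∧
          (i = 1 ∨ (2 ≤ i ∧ UTD (seg x 1 (i - 1)) (seg y (j - i + 1) (j - 1))))) ∨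
        (∃ h k : ℕ, 1 ≤ h ∧ 1 ≤ k ∧ h + k ≤ i ∧ h + k ≤ j ∧
          seg x (i - k - h + 1) (i - k) = seg y (j - h + 1) j ∧
          seg x (i - k + 1) i = seg y (j - h - k + 1) (j - h) ∧
          (i = h + k ∨
            UTD (seg x 1 (i - h - k)) (seg y (j - i + 1) (j - h - k))))) := by
  subst hx hy
  have hji : j - i + 1 - 1 = j - i := by omega
  have hseg1 : ∀ t : ℕ, seg x 1 t = x.take t := fun t => by simp [seg_def]
  -- getElem? facts
  have hxi : i - 1 < x.length := by omega
  have hcx : x[i-1]? = some x[i-1] := List.getElem?_eq_getElem hxi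
  have hyj : j - 1 < y.length := by omega
  have hcy : y[j-1]? = some y[j-1] := List.getElem?_eq_getElem hyj
  have ex : x.take i = x.take (i-1) ++ [x[i-1]] := by
    have h1 : x.take (i-1+1) = x.take (i-1) ++ (x[i-1]?).toList := List.take_succ
    rw [hcx] at h1
    simpa [show i-1+1 = i by omega] using h1
  have ey : y.take j = y.take (j-1) ++ [y[j-1]] := by
    have h1 : y.take (j-1+1) = y.take (j-1) ++ (y[j-1]?).toList := List.take_succ
    rw [hcy] at h1
    simpa [show j-1+1 = j by omega] using h1
  have ey2 : (y.take j).drop (j-i) = (y.take (j-1)).drop (j-i) ++ [y[j-1]] := by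
    rw [ey, List.drop_append_of_le_length (by simp; omega)]
  constructor
  · intro H
    rw [hseg1, seg_def, hji] at H
    generalize hA : x.take i = A at H
    generalize hB : (y.take j).drop (j-i) = B at H
    cases H with
    | nil =>
        exfalso
        have : (x.take i).length = 0 := by rw [hA]; rfl
        rw [List.length_take] at this
        omega
    | snoc u v a h =>
        left
        -- x side
        have hAlen : u.length + 1 = i := by
          have := congrArg List.length hA
          simp at this; omega
        have hx2 : x.take (i-1) ++ [x[i-1]] = u ++ [a] := by rw [← ex, hA]
        obtain ⟨hu, ha⟩ := List.append_inj hx2 (by simp; omega)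
        have ha' : x[i-1] = a := by simpa using ha
        -- y side
        have hy2 : (y.take (j-1)).drop (j-i) ++ [y[j-1]] = v ++ [a] := by
          rw [← ey2, hB]
        have hvlen : v.length = u.length := by
          have := congrArg List.length hB
          simp at this; omega
        obtain ⟨hv, hb⟩ := List.append_inj hy2 (by simp; omega)
        have hb' : y[j-1] = a := by simpa using hb
        refine ⟨by rw [hcx, hcy, ha', hb'], ?_⟩
        rcases Nat.lt_or_ge i 2 with hi2 | hi2
        · exact Or.inl (by omega)
        · refine Or.inr ⟨hi2, ?_⟩
          rw [hseg1, seg_def, hji]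
          rw [← hu, ← hv] at h
          exact h
    | transloc u v z w h hz hw =>
        right
        have hzl : 1 ≤ z.length := List.length_pos_iff.mpr hz
        have hwl : 1 ≤ w.length := List.length_pos_iff.mpr hw
        have hAlen : u.length + z.length + w.length = i := by
          have := congrArg List.length hA
          simp at this; omega
        have hBlen : v.length = u.length := by
          have := congrArg List.length hB
          simp at this; omega
        set h' := z.length with hh'
        set k' := w.length with hk'
        -- decompose x.take i
        have d1 : x.take i = x.take (i-k') ++ (x.take i).drop (i-k') :=
          splitG0 x (by omega) (by omega)
        have d2 : x.take (i-k') = x.take (i-h'-k') ++ (x.take (i-k')).drop (i-h'-k') :=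
          splitG0 x (by omega) (by omega)
        have dx : x.take (i-h'-k') ++ (x.take (i-k')).drop (i-h'-k')
            ++ (x.take i).drop (i-k') = u ++ z ++ w := by
          rw [← d2, ← d1, hA]
        obtain ⟨dx1, hwx⟩ := List.append_inj dx (by simp; omega)
        obtain ⟨hux, hzx⟩ := List.append_inj dx1 (by simp; omega)
        -- decompose (y.take j).drop (j-i)
        have d3 : (y.take j).drop (j-i) = (y.take (j-h')).drop (j-i) ++ (y.take j).drop (j-h') :=
          splitG y (by omega) (by omega) (by omega)
        have d4 : (y.take (j-h')).drop (j-i)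
            = (y.take (j-h'-k')).drop (j-i) ++ (y.take (j-h')).drop (j-h'-k') :=
          splitG y (by omega) (by omega) (by omega)
        have dy : (y.take (j-h'-k')).drop (j-i) ++ (y.take (j-h')).drop (j-h'-k')
            ++ (y.take j).drop (j-h') = v ++ w ++ z := by
          rw [← d4, ← d3, hB]
        obtain ⟨dy1, hzy⟩ := List.append_inj dy (by simp; omega)
        obtain ⟨hvy, hwy⟩ := List.append_inj dy1 (by simp; omega)
        refine ⟨h', k', hzl, hwl, by omega, by omega, ?_, ?_, Or.inr ?_⟩
        · rw [seg_def, seg_def]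
          simp only [Nat.add_sub_cancel]
          rw [show i - k' - h' = i - h' - k' from by omega, hzx, hzy]
        · rw [seg_def, seg_def]
          simp only [Nat.add_sub_cancel]
          rw [hwx, hwy]
        · rw [hseg1, seg_def, hji, hux, hvy]
          exact h
  · rintro (⟨hxy, hcase⟩ | ⟨h, k, hh1, hk1, hhki, hhkj, e1, e2, hrest⟩)
    · -- case (a)
      rw [hseg1, seg_def, hji, ex, ey2]
      have hxyv : x[i-1] = y[j-1] := by
        rw [hcx, hcy] at hxy; exact Option.some_injective _ hxy
      rw [hxyv]
      refine UTD.snoc _ _ _ ?_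
      rcases hcase with h1 | ⟨h2, hU⟩
      · rw [h1]
        simp only [Nat.sub_self, List.take_zero]
        have hnil : (y.take (j-1)).drop (j-1) = [] :=
          List.drop_eq_nil_of_le (by simp)
        rw [hnil]
        exact UTD.nil
      · rw [hseg1, seg_def, hji] at hU
        exact hU
    · -- case (b)
      rw [seg_def, seg_def] at e1 e2
      simp only [Nat.add_sub_cancel] at e1 e2
      rw [show i - k - h = i - h - k from by omega] at e1
      rw [hseg1, seg_def, hji]
      have d1 : x.take i = x.take (i-k) ++ (x.take i).drop (i-k) :=
        splitG0 x (by omega) (by omega)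
      have d2 : x.take (i-k) = x.take (i-h-k) ++ (x.take (i-k)).drop (i-h-k) :=
        splitG0 x (by omega) (by omega)
      have d3 : (y.take j).drop (j-i) = (y.take (j-h)).drop (j-i) ++ (y.take j).drop (j-h) :=
        splitG y (by omega) (by omega) (by omega)
      have d4 : (y.take (j-h)).drop (j-i)
          = (y.take (j-h-k)).drop (j-i) ++ (y.take (j-h)).drop (j-h-k) :=
        splitG y (by omega) (by omega) (by omega)
      have hzne : (x.take (i-k)).drop (i-h-k) ≠ [] := by
        intro hc
        have := congrArg List.length hc
        simp at this; omega
      have hwne : (x.take i).drop (i-k) ≠ [] := by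
        intro hc
        have := congrArg List.length hc
        simp at this; omega
      have hUuv : UTD (x.take (i-h-k)) ((y.take (j-h-k)).drop (j-i)) := by
        rcases hrest with h1 | hU
        · have hu0 : x.take (i-h-k) = [] := by
            rw [show i-h-k = 0 from by omega]; rfl
          have hv0 : (y.take (j-h-k)).drop (j-i) = [] :=
            List.drop_eq_nil_of_le (by simp; omega)
          rw [hu0, hv0]; exact UTD.nil
        · rw [hseg1, seg_def, hji] at hU
          exact hU
      rw [d1, d2, d3, d4, ← e1, ← e2]
      exact UTD.transloc _ _ _ _ hUuv hzne hwne
end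

section
/- Let x be a string of length m, and let w and z be nonempty factors of x with |w| ≤ |z|. If end-pos_x(w) = end-pos_x(z), then w is a suffix of z. -/
/-- `endPos x w` is the set of all positions `i` in `x` at which an occurrence
of `w` ends, i.e. `w` is a suffix of the prefix `x[1..i]`. -/
def endPos {α : Type*} (x w : List α) : Set ℕ :=
  {i | 1 ≤ i ∧ i ≤ x.length ∧ w <:+ x.take i}

/-- If `w` and `z` are nonempty factors of `x` with `|w| ≤ |z|` and
`end-pos(w) = end-pos(z)`, then `w` is a suffix of `z`. -/
theorem suffix_of_endPos_eq {α : Type*} (x w z : List α) (m : ℕ)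
    (hx : x.length = m)
    (hw : w <:+: x) (hz : z <:+: x) (hwne : w ≠ []) (hzne : z ≠ [])
    (hlen : w.length ≤ z.length)
    (h : endPos x w = endPos x z) :
    w <:+ z := by
  obtain ⟨s, t, hst⟩ := hz
  set i := (s ++ z).length with hi
  have htake : x.take i = s ++ z := by
    rw [← hst, List.append_assoc] at *
    rw [hst, ← List.append_assoc, List.take_left]
  have hzlen : 1 ≤ z.length := List.length_pos_iff.mpr hzne
  have hiz : i ∈ endPos x z := by
    refine ⟨?_, ?_, ?_⟩
    · simp [hi]; omega
    · rw [← hst]; simp [hi]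
    · rw [htake]; exact List.suffix_append s z
  have hiw : i ∈ endPos x w := by rw [h]; exact hiz
  have hws : w <:+ x.take i := hiw.2.2
  have hzs : z <:+ x.take i := by rw [htake]; exact List.suffix_append s z
  exact List.suffix_of_suffix_length_le hws hzs hlen
end

section
/- Let x be a string of length m, and let w and z be nonempty factors of x with end-pos_x(w) = end-pos_x(z). Then for every string u, u is a suffix of w with end-pos_x(u) ≠ end-pos_x(w) if and only if u is a suffix of z with end-pos_x(u) ≠ end-pos_x(z). Consequently, the longest suffix u of w satisfying end-pos_x(u) ≠ end-pos_x(w) coincides with the longest suffix u of z satisfying end-pos_x(u) ≠ end-pos_x(z) (i.e., the suffix link suf is constant on equivalence classes of the relation w R_x z ⟺ end-pos_x(w) = end-pos_x(z)). -/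
lemma endPos_anti {α : Type*} {x u w : List α} (h : u <:+ w) :
    endPos x w ⊆ endPos x u := by
  intro i hi
  exact ⟨hi.1, hi.2.1, h.trans hi.2.2⟩

lemma endPos_nonempty {α : Type*} {x w : List α} (hw : w <:+: x) (hwne : w ≠ []) :
    ∃ i, i ∈ endPos x w := by
  obtain ⟨s, t, rfl⟩ := hw
  refine ⟨s.length + w.length, ?_, ?_, ?_⟩
  · have : w.length ≠ 0 := fun h => hwne (List.length_eq_zero_iff.mp h)
    omega
  · simp
  · have : (s ++ w ++ t).take (s.length + w.length) = s ++ w := by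
      rw [List.append_assoc, List.take_append]
      simp
    rw [this]
    exact ⟨s, rfl⟩

lemma key {α : Type*} {x w z u : List α} (hw : w <:+: x) (hwne : w ≠ [])
    (h : endPos x w = endPos x z) (hu : u <:+ w) (hne : endPos x u ≠ endPos x w) :
    u <:+ z := by
  obtain ⟨i, hi⟩ := endPos_nonempty hw hwne
  have hiz : i ∈ endPos x z := h ▸ hi
  have huw : u <:+ x.take i := hu.trans hi.2.2
  rcases List.suffix_or_suffix_of_suffix huw hiz.2.2 with h1 | h1
  · exact h1
  · exfalso
    apply hne
    apply Set.Subset.antisymm _ (endPos_anti hu)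
    calc endPos x u ⊆ endPos x z := endPos_anti h1
      _ = endPos x w := h.symm

/-- If `w` and `z` are nonempty factors of `x` with `end-pos(w) = end-pos(z)`,
then for every string `u`, `u` is a suffix of `w` with `end-pos(u) ≠ end-pos(w)`
iff `u` is a suffix of `z` with `end-pos(u) ≠ end-pos(z)`; consequently the
longest such suffixes coincide (the suffix link is constant on `R_x`-classes). -/
theorem suffix_link_const_on_classes {α : Type*} (x w z : List α) (m : ℕ)
    (hx : x.length = m)
    (hw : w <:+: x) (hz : z <:+: x) (hwne : w ≠ []) (hzne : z ≠ [])
    (h : endPos x w = endPos x z) :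
    (∀ u : List α,
        (u <:+ w ∧ endPos x u ≠ endPos x w) ↔ (u <:+ z ∧ endPos x u ≠ endPos x z)) ∧
      (∀ u₁ u₂ : List α,
        (u₁ <:+ w ∧ endPos x u₁ ≠ endPos x w ∧
          ∀ u : List α, u <:+ w → endPos x u ≠ endPos x w → u.length ≤ u₁.length) →
        (u₂ <:+ z ∧ endPos x u₂ ≠ endPos x z ∧
          ∀ u : List α, u <:+ z → endPos x u ≠ endPos x z → u.length ≤ u₂.length) →
        u₁ = u₂) := by
  have iff1 : ∀ u : List α,
      (u <:+ w ∧ endPos x u ≠ endPos x w) ↔ (u <:+ z ∧ endPos x u ≠ endPos x z) := by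
    intro u
    constructor
    · rintro ⟨hu, hne⟩
      exact ⟨key hw hwne h hu hne, fun heq => hne (heq.trans h.symm)⟩
    · rintro ⟨hu, hne⟩
      exact ⟨key hz hzne h.symm hu hne, fun heq => hne (heq.trans h)⟩
  refine ⟨iff1, ?_⟩
  rintro u₁ u₂ ⟨h1s, h1ne, h1max⟩ ⟨h2s, h2ne, h2max⟩
  have h1z : u₁ <:+ z ∧ endPos x u₁ ≠ endPos x z := (iff1 u₁).mp ⟨h1s, h1ne⟩
  have h2w : u₂ <:+ w ∧ endPos x u₂ ≠ endPos x w := (iff1 u₂).mpr ⟨h2s, h2ne⟩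
  have hlen : u₁.length = u₂.length :=
    le_antisymm (h2max u₁ h1z.1 h1z.2) (h1max u₂ h2w.1 h2w.2)
  rcases List.suffix_or_suffix_of_suffix h1z.1 h2s with h' | h'
  · exact h'.eq_of_length hlen
  · exact (h'.eq_of_length hlen.symm).symm
end

section
/- Define μ : ℕ → ℕ by μ(0) = 1 and, for k ≥ 0, μ(k+1) = (Σ_{h=0}^{k} μ(h)) + (Σ_{h=1}^{⌊(k−1)/2⌋} μ(k−2h−1)). Then μ(k+1) ≤ 3^k for every k ≥ 0. -/
lemma geom_three (n : ℕ) : 2 * ∑ i ∈ Finset.range n, 3 ^ i + 1 = 3 ^ n := by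
  induction n with
  | zero => simp
  | succ n ih => rw [Finset.sum_range_succ, pow_succ]; omega

lemma sum_bound (μ : ℕ → ℕ) (h0 : μ 0 = 1) (n : ℕ)
    (hk : ∀ j < n, μ (j + 1) ≤ 3 ^ j) :
    2 * ∑ h ∈ Finset.range (n + 1), μ h ≤ 3 ^ n + 1 := by
  rw [Finset.sum_range_succ']
  have : ∑ i ∈ Finset.range n, μ (i + 1) ≤ ∑ i ∈ Finset.range n, 3 ^ i :=
    Finset.sum_le_sum fun i hi => hk i (Finset.mem_range.mp hi)
  have hg := geom_three n
  omega

/-- If `μ : ℕ → ℕ` satisfies the recursion `μ(0) = 1` and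
`μ(k+1) = Σ_{h=0}^{k} μ(h) + Σ_{h=1}^{⌊(k-1)/2⌋} μ(k-2h-1)` for `k ≥ 0`,
then `μ(k+1) ≤ 3^k` for every `k ≥ 0`. -/
theorem mu_succ_le_three_pow (μ : ℕ → ℕ)
    (h0 : μ 0 = 1)
    (hrec : ∀ k : ℕ, μ (k + 1) =
      (∑ h ∈ Finset.range (k + 1), μ h) +
        ∑ h ∈ Finset.Icc 1 ((k - 1) / 2), μ (k - 2 * h - 1)) :
    ∀ k : ℕ, μ (k + 1) ≤ 3 ^ k := by
  intro k
  induction k using Nat.strong_induction_on with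
  | _ k ih =>
    have hS : 2 * ∑ h ∈ Finset.range (k + 1), μ h ≤ 3 ^ k + 1 :=
      sum_bound μ h0 k ih
    by_cases hk3 : k < 3
    · have hempty : Finset.Icc 1 ((k - 1) / 2) = ∅ := by
        apply Finset.Icc_eq_empty
        omega
      have h1 : μ (k + 1) = ∑ h ∈ Finset.range (k + 1), μ h := by
        rw [hrec k, hempty]; simp
      have hp : (1 : ℕ) ≤ 3 ^ k := Nat.one_le_pow _ _ (by norm_num)
      omega
    · push_neg at hk3
      -- bound the extra sum by the partial sum up to k-3
      have hextra : ∑ h ∈ Finset.Icc 1 ((k - 1) / 2), μ (k - 2 * h - 1) ≤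
          ∑ j ∈ Finset.range (k - 3 + 1), μ j := by
        have hinj : Set.InjOn (fun h => k - 2 * h - 1) (Finset.Icc 1 ((k - 1) / 2)) := by
          intro a ha b hb hab
          simp only [Finset.coe_Icc, Set.mem_Icc] at ha hb
          simp only at hab
          omega
        rw [← Finset.sum_image (fun a ha b hb => hinj ha hb)]
        apply Finset.sum_le_sum_of_subset
        intro j hj
        simp only [Finset.mem_image, Finset.mem_Icc] at hj
        obtain ⟨h, ⟨h1, h2⟩, rfl⟩ := hj
        have : 2 * h ≤ k - 1 := by omega
        simp only [Finset.mem_range]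
        omega
      have hS3 : 2 * ∑ j ∈ Finset.range (k - 3 + 1), μ j ≤ 3 ^ (k - 3) + 1 :=
        sum_bound μ h0 (k - 3) (fun j hj => ih j (by omega))
      have hkey : μ (k + 1) = (∑ h ∈ Finset.range (k + 1), μ h) +
          ∑ h ∈ Finset.Icc 1 ((k - 1) / 2), μ (k - 2 * h - 1) := hrec k
      have hpow : 3 ^ k = 27 * 3 ^ (k - 3) := by
        have h1 : 3 ^ (k - 3 + 3) = 27 * 3 ^ (k - 3) := by rw [pow_add]; ring
        rwa [show k - 3 + 3 = k from by omega] at h1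
      have hp : (1 : ℕ) ≤ 3 ^ (k - 3) := Nat.one_le_pow _ _ (by norm_num)
      omega
end

section
/- Let s be a string of length k ≥ 1 over an alphabet Σ whose characters are pairwise distinct. Then the number of distinct strings t over Σ such that s utd-matches t is at most 3^{k−1}. -/
/-- Decoder: given a buffer, a mode flag, a list of gap labels and the string,
reconstruct the matched string. -/
def utdDec {α : Type*} : List α → Bool → List (Fin 3) → List α → List α
  | buf, _, _, [] => buf
  | buf, inW, [], a :: s =>
      if inW then a :: buf ++ utdDec [] false [] s
      else buf ++ [a] ++ utdDec [] false [] s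
  | buf, inW, g :: gs, a :: s =>
      if inW then
        if g = 1 then a :: utdDec buf true gs s
        else a :: (buf ++ utdDec [] false gs s)
      else
        if g = 1 then utdDec (buf ++ [a]) false gs s
        else if g = 2 then utdDec (buf ++ [a]) true gs s
        else buf ++ [a] ++ utdDec [] false gs s

lemma utdDec_append {α : Type*} :
    ∀ (c : List (Fin 3)) (u : List α), c.length + 1 = u.length →
    ∀ (buf : List α) (inW : Bool) (c2 : List (Fin 3)) (rest : List α),
    utdDec buf inW (c ++ 0 :: c2) (u ++ rest) =
      utdDec buf inW c u ++ utdDec [] false c2 rest := by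
  intro c
  induction c with
  | nil =>
    intro u hu buf inW c2 rest
    match u, hu with
    | [a], _ =>
      cases inW <;> simp [utdDec]
  | cons g gs ih =>
    intro u hu buf inW c2 rest
    match u, hu with
    | a :: u', hu =>
      have hu' : gs.length + 1 = u'.length := by simpa using hu
      cases inW <;> by_cases h1 : g = 1 <;> by_cases h2 : g = 2 <;>
        simp [utdDec, h1, h2, ih u' hu', List.append_assoc]

lemma utdDec_z {α : Type*} :
    ∀ (z : List α) (b : α) (buf : List α) (c2 : List (Fin 3)) (rest : List α),
    utdDec buf false (List.replicate z.length (1 : Fin 3) ++ (2 : Fin 3) :: c2)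
      (b :: (z ++ rest)) = utdDec (buf ++ b :: z) true c2 rest := by
  intro z
  induction z with
  | nil => intro b buf c2 rest; simp [utdDec]
  | cons x z' ih =>
    intro b buf c2 rest
    simp only [List.length_cons, List.replicate_succ, List.cons_append, utdDec,
      List.append_eq, Bool.false_eq_true, if_false, reduceIte]
    rw [ih x (buf ++ [b]) c2 rest]
    simp

lemma utdDec_w {α : Type*} :
    ∀ (w : List α) (b : α) (buf : List α),
    utdDec buf true (List.replicate w.length (1 : Fin 3)) (b :: w) = b :: w ++ buf := by
  intro w
  induction w with
  | nil => intro b buf; simp [utdDec]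
  | cons x w' ih =>
    intro b buf
    simp [utdDec, List.replicate_succ, ih x buf]

lemma utdDec_zw {α : Type*} (z w : List α) (hz : z ≠ []) (hw : w ≠ []) :
    utdDec [] false (List.replicate (z.length - 1) (1 : Fin 3) ++ (2 : Fin 3) ::
      List.replicate (w.length - 1) (1 : Fin 3)) (z ++ w) = w ++ z := by
  match z, hz, w, hw with
  | b :: z', _, d :: w', _ =>
    have h1 := utdDec_z z' b [] (List.replicate ((d :: w').length - 1) (1 : Fin 3)) (d :: w')
    have h2 := utdDec_w w' d (b :: z')
    simp only [List.length_cons, Nat.add_sub_cancel, List.nil_append] at *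
    rw [List.cons_append, h1, h2]

lemma exists_code {α : Type*} {u v : List α} (h : UTD u v) :
    (u = [] ∧ v = []) ∨
    ∃ c : List (Fin 3), c.length + 1 = u.length ∧ v = utdDec [] false c u := by
  induction h with
  | nil => exact Or.inl ⟨rfl, rfl⟩
  | snoc u v a _ ih =>
    right
    rcases ih with ⟨hu, hv⟩ | ⟨c, hc, hvc⟩
    · subst hu; subst hv
      exact ⟨[], by simp, by simp [utdDec]⟩
    · refine ⟨c ++ [0], by simp [← hc], ?_⟩
      have := utdDec_append c u hc [] false [] [a]
      simp only [utdDec] at this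
      rw [this, ← hvc]
      simp [utdDec]
  | transloc u v z w _ hz hw ih =>
    right
    rcases ih with ⟨hu, hv⟩ | ⟨c, hc, hvc⟩
    · subst hu; subst hv
      refine ⟨List.replicate (z.length - 1) (1 : Fin 3) ++ (2 : Fin 3) ::
        List.replicate (w.length - 1) (1 : Fin 3), ?_, ?_⟩
      · have hz1 : 1 ≤ z.length := List.length_pos_iff.mpr hz
        have hw1 : 1 ≤ w.length := List.length_pos_iff.mpr hw
        simp [List.length_append]
        omega
      · simp only [List.nil_append]
        exact (utdDec_zw z w hz hw).symm
    · refine ⟨c ++ 0 :: (List.replicate (z.length - 1) (1 : Fin 3) ++ (2 : Fin 3) ::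
        List.replicate (w.length - 1) (1 : Fin 3)), ?_, ?_⟩
      · have hz1 : 1 ≤ z.length := List.length_pos_iff.mpr hz
        have hw1 : 1 ≤ w.length := List.length_pos_iff.mpr hw
        simp [List.length_append, ← hc]
        omega
      · have := utdDec_append c u hc [] false
          (List.replicate (z.length - 1) (1 : Fin 3) ++ (2 : Fin 3) ::
            List.replicate (w.length - 1) (1 : Fin 3)) (z ++ w)
        rw [List.append_assoc u z w, this, utdDec_zw z w hz hw, hvc, List.append_assoc]

/-- If `s` is a string of length `k ≥ 1` with pairwise distinct characters, then
the number of distinct strings `t` such that `s` utd-matches `t` is at most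
`3^(k-1)`. -/
theorem card_utd_matches_le_three_pow {α : Type*}
    (s : List α) (k : ℕ) (hk : 1 ≤ k) (hs : s.length = k) (hnd : s.Nodup) :
    {t : List α | UTD s t}.encard ≤ ((3 ^ (k - 1) : ℕ) : ℕ∞) := by
  have hsub : {t : List α | UTD s t} ⊆
      (fun f : Fin (k - 1) → Fin 3 => utdDec [] false (List.ofFn f) s) '' Set.univ := by
    intro t ht
    rcases exists_code ht with ⟨hu, _⟩ | ⟨c, hc, htc⟩
    · exfalso; rw [hu] at hs; simp at hs; omega
    · have hlen : c.length = k - 1 := by omega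
      refine ⟨fun i => c.get (i.cast hlen.symm), Set.mem_univ _, ?_⟩
      have : List.ofFn (fun i : Fin (k-1) => c.get (i.cast hlen.symm)) = c := by
        apply List.ext_get
        · simp [hlen]
        · intro n h1 h2
          simp
      show utdDec [] false (List.ofFn fun i : Fin (k-1) => c.get (i.cast hlen.symm)) s = t
      rw [this, ← htc]
  calc {t : List α | UTD s t}.encard
      ≤ ((fun f : Fin (k - 1) → Fin 3 => utdDec [] false (List.ofFn f) s) '' Set.univ).encard :=
        Set.encard_le_encard hsub
    _ ≤ (Set.univ : Set (Fin (k - 1) → Fin 3)).encard := Set.encard_image_le _ _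
    _ = ((3 ^ (k - 1) : ℕ) : ℕ∞) := by
        rw [Set.encard_univ]
        simp [ENat.card_eq_coe_fintype_card]
end

section
/- Let σ ≥ 2 be a real number and m ≥ 1 an integer. Suppose h̄ is an integer with 1 ≤ h̄ ≤ m such that (m − h̄ + 1)/σ^{h̄} < 1 and (m − h + 1)/σ^{h} ≥ 1 for all integers h with 1 ≤ h < h̄. Then Σ_{i=1}^{m} min(1, (m − i + 1)/σ^{i}) < h̄ + 1. -/
/-- Let `σ ≥ 2` be a real number and `m ≥ 1` an integer. If `h̄` is an integer
with `1 ≤ h̄ ≤ m` such that `(m - h̄ + 1)/σ^h̄ < 1` and `(m - h + 1)/σ^h ≥ 1`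
for all `1 ≤ h < h̄`, then `Σ_{i=1}^{m} min(1, (m - i + 1)/σ^i) < h̄ + 1`. -/
theorem sum_min_lt (σ : ℝ) (hσ : 2 ≤ σ) (m : ℕ) (hm : 1 ≤ m)
    (hb : ℕ) (hb1 : 1 ≤ hb) (hbm : hb ≤ m)
    (hlt : ((m : ℝ) - hb + 1) / σ ^ hb < 1)
    (hge : ∀ h : ℕ, 1 ≤ h → h < hb → 1 ≤ ((m : ℝ) - h + 1) / σ ^ h) :
    ∑ i ∈ Finset.Icc 1 m, min 1 (((m : ℝ) - i + 1) / σ ^ i) < (hb : ℝ) + 1 := by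
  have hσ0 : (0:ℝ) < σ := by linarith
  set f : ℕ → ℝ := fun i => min 1 (((m : ℝ) - i + 1) / σ ^ i) with hf
  set r : ℝ := ((m : ℝ) - hb + 1) / σ ^ hb with hr
  have hbmR : (hb : ℝ) ≤ m := by exact_mod_cast hbm
  have hr0 : 0 < r := div_pos (by linarith) (pow_pos hσ0 hb)
  -- split the sum
  have hsplit : ∑ i ∈ Finset.Icc 1 m, f i
      = ∑ i ∈ Finset.Ioc 0 (hb - 1), f i + ∑ i ∈ Finset.Ioc (hb - 1) m, f i := by
    rw [Finset.sum_Ioc_consecutive _ (Nat.zero_le _) (le_trans (Nat.sub_le _ _) hbm)]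
    congr 1
  -- first part: each term is 1
  have h1 : ∑ i ∈ Finset.Ioc 0 (hb - 1), f i = (hb : ℝ) - 1 := by
    have hone : ∀ i ∈ Finset.Ioc 0 (hb - 1), f i = 1 := by
      intro i hi
      simp only [Finset.mem_Ioc] at hi
      have := hge i hi.1 (by omega)
      simp only [hf]
      exact min_eq_left this
    rw [Finset.sum_congr rfl hone, Finset.sum_const, Nat.card_Ioc, nsmul_eq_mul, mul_one]
    rw [Nat.sub_zero, Nat.cast_sub hb1, Nat.cast_one]
  -- tail
  have h2 : ∑ i ∈ Finset.Ioc (hb - 1) m, f i < 2 := by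
    have heq : Finset.Ioc (hb - 1) m = Finset.Ico hb (m + 1) := by
      ext x; simp only [Finset.mem_Ioc, Finset.mem_Ico]; omega
    rw [heq, Finset.sum_Ico_eq_sum_range]
    have hbound : ∀ j ∈ Finset.range (m + 1 - hb), f (hb + j) ≤ r * (1/2)^j := by
      intro j hj
      simp only [Finset.mem_range] at hj
      have hjm : hb + j ≤ m := by omega
      have hjmR : ((hb : ℝ) + j) ≤ m := by exact_mod_cast hjm
      have hstep : f (hb + j) ≤ ((m : ℝ) - ((hb : ℝ) + j) + 1) / σ ^ (hb + j) := by
        simp only [hf]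
        push_cast
        exact min_le_right _ _
      have hterm : ((m : ℝ) - ((hb : ℝ) + j) + 1) / σ ^ (hb + j) ≤ r * (1/2)^j := by
        rw [pow_add]
        have hj0 : (0:ℝ) ≤ j := Nat.cast_nonneg j
        have hnum : ((m : ℝ) - ((hb : ℝ) + j) + 1) ≤ (m : ℝ) - hb + 1 := by linarith
        have hden : σ ^ hb * 2 ^ j ≤ σ ^ hb * σ ^ j :=
          mul_le_mul_of_nonneg_left (pow_le_pow_left₀ (by norm_num) hσ j)
            (le_of_lt (pow_pos hσ0 hb))
        have hden0 : (0:ℝ) < σ ^ hb * 2 ^ j := by positivity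
        calc ((m : ℝ) - ((hb : ℝ) + j) + 1) / (σ ^ hb * σ ^ j)
            ≤ ((m : ℝ) - hb + 1) / (σ ^ hb * 2 ^ j) :=
              div_le_div₀ (by linarith) hnum hden0 hden
          _ = r * (1/2)^j := by
              rw [hr, div_pow, one_pow, div_mul_div_comm, mul_one]
      exact hstep.trans hterm
    calc ∑ j ∈ Finset.range (m + 1 - hb), f (hb + j)
        ≤ ∑ j ∈ Finset.range (m + 1 - hb), r * (1/2)^j := Finset.sum_le_sum hbound
      _ = r * ∑ j ∈ Finset.range (m + 1 - hb), (1/2:ℝ)^j := by rw [Finset.mul_sum]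
      _ ≤ r * 2 := by
          apply mul_le_mul_of_nonneg_left _ hr0.le
          rw [geom_sum_eq (by norm_num : (1/2:ℝ) ≠ 1) (m + 1 - hb)]
          have hpow : (0:ℝ) ≤ (1/2:ℝ)^(m + 1 - hb) := by positivity
          have hring : ((1/2:ℝ)^(m + 1 - hb) - 1)/(1/2 - 1) = 2 - 2*(1/2:ℝ)^(m + 1 - hb) := by
            ring
          rw [hring]
          linarith
      _ < 2 := by linarith
  rw [hsplit, h1] at *
  linarith
end

section
/- Let σ ≥ 4 be a real number and m ≥ 1 an integer. Suppose h̄ is an integer with 1 ≤ h̄ ≤ m such that (m − h̄ + 1)/σ^{h̄} < 1 and (m − h + 1)/σ^{h} ≥ 1 for all integers h with 1 ≤ h < h̄. Then Σ_{h=1}^{m} √(min(1, (m − h + 1)/σ^{h})) < h̄ + 1. -/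
/-- Let `σ ≥ 4` be a real number and `m ≥ 1` an integer. If `h̄` is an integer
with `1 ≤ h̄ ≤ m` such that `(m - h̄ + 1)/σ^h̄ < 1` and `(m - h + 1)/σ^h ≥ 1`
for all `1 ≤ h < h̄`, then `Σ_{h=1}^{m} √(min(1, (m - h + 1)/σ^h)) < h̄ + 1`. -/
theorem sum_sqrt_min_lt (σ : ℝ) (hσ : 4 ≤ σ) (m : ℕ) (hm : 1 ≤ m)
    (hb : ℕ) (hb1 : 1 ≤ hb) (hbm : hb ≤ m)
    (hlt : ((m : ℝ) - hb + 1) / σ ^ hb < 1)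
    (hge : ∀ h : ℕ, 1 ≤ h → h < hb → 1 ≤ ((m : ℝ) - h + 1) / σ ^ h) :
    ∑ h ∈ Finset.Icc 1 m, Real.sqrt (min 1 (((m : ℝ) - h + 1) / σ ^ h)) <
      (hb : ℝ) + 1 := by
  have hσ0 : (0:ℝ) < σ := by linarith
  rw [show Finset.Icc 1 m = Finset.Ico 1 (m+1) by rw [Finset.Ico_add_one_right_eq_Icc],
    ← Finset.sum_Ico_consecutive _ hb1 (by omega : hb ≤ m+1)]
  have h1 : ∑ h ∈ Finset.Ico 1 hb,
      Real.sqrt (min 1 (((m : ℝ) - h + 1) / σ ^ h)) = (hb:ℝ) - 1 := by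
    rw [Finset.sum_congr rfl (fun h hh => ?_)]
    · rw [Finset.sum_const, Nat.card_Ico, nsmul_eq_mul, mul_one]
      push_cast [Nat.cast_sub hb1]
      ring
    · simp only [Finset.mem_Ico] at hh
      rw [min_eq_left (hge h hh.1 hh.2), Real.sqrt_one]
  have h2 : ∑ h ∈ Finset.Ico hb (m+1),
      Real.sqrt (min 1 (((m : ℝ) - h + 1) / σ ^ h)) < 2 := by
    have hbound : ∀ h ∈ Finset.Ico hb (m+1),
        Real.sqrt (min 1 (((m : ℝ) - h + 1) / σ ^ h)) ≤ (1/2:ℝ)^(h-hb) := by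
      intro h hh
      simp only [Finset.mem_Ico] at hh
      have hσh : (0:ℝ) < σ^h := pow_pos hσ0 h
      have hσb : (0:ℝ) < σ^hb := pow_pos hσ0 hb
      have hσk : (0:ℝ) < σ^(h-hb) := pow_pos hσ0 _
      have hx : ((m:ℝ) - h + 1) / σ^h ≤ (1/4:ℝ)^(h-hb) := by
        have e1 : ((m:ℝ) - h + 1) / σ^h ≤ ((m:ℝ) - hb + 1) / σ^h := by
          gcongr <;> first
            | exact hσh.le
            | · have : (hb:ℝ) ≤ h := by exact_mod_cast hh.1
                linarith
        have epow : σ^h = σ^hb * σ^(h-hb) := by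
          rw [← pow_add]; congr 1; omega
        have e2 : ((m:ℝ) - hb + 1) / σ^h
            = (((m:ℝ) - hb + 1) / σ^hb) / σ^(h-hb) := by
          rw [epow, div_mul_eq_div_div]
        have e3 : (((m:ℝ) - hb + 1) / σ^hb) / σ^(h-hb) ≤ 1 / σ^(h-hb) := by
          gcongr <;> first | exact hσk.le | exact hlt.le
        have e4 : 1 / σ^(h-hb) ≤ (1/4:ℝ)^(h-hb) := by
          rw [div_pow, one_pow]
          gcongr <;> first | norm_num | exact hσ
        linarith [e1, e2 ▸ e3]
      have hmin : min 1 (((m:ℝ) - h + 1) / σ^h) ≤ (1/4:ℝ)^(h-hb) :=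
        le_trans (min_le_right _ _) hx
      have := Real.sqrt_le_sqrt hmin
      have hsq : ((1:ℝ)/4)^(h-hb) = ((1/2:ℝ)^(h-hb))^2 := by
        rw [← pow_mul, pow_mul']
        norm_num
      rwa [hsq, Real.sqrt_sq (by positivity)] at this
    calc ∑ h ∈ Finset.Ico hb (m+1), Real.sqrt (min 1 (((m : ℝ) - h + 1) / σ ^ h))
        ≤ ∑ h ∈ Finset.Ico hb (m+1), (1/2:ℝ)^(h-hb) := Finset.sum_le_sum hbound
      _ = ∑ i ∈ Finset.range (m+1-hb), (1/2:ℝ)^i := by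
          rw [Finset.sum_Ico_eq_sum_range]
          exact Finset.sum_congr rfl (fun i _ => by congr 1; omega)
      _ < 2 := by
          have hne : (1/2:ℝ) ≠ 1 := by norm_num
          rw [geom_sum_eq hne]
          have h0 : (0:ℝ) < (1/2:ℝ)^(m+1-hb) := by positivity
          have heq : ((1/2:ℝ)^(m+1-hb) - 1)/((1/2:ℝ)-1)
              = 2 - 2*(1/2:ℝ)^(m+1-hb) := by ring
          rw [heq]; linarith
  linarith
end
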